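/- arXiv:2011.12332 — 2 statements merged into one kernel-verified Lean document; each statement's English description precedes it below -/
import Mathlib

section
/- Let m₀, …, m_k be positive integers with gcd(m_i, m_{i+1}) = d for every 0 ≤ i ≤ k−1, and suppose m_i divides m_{i−1} + m_{i+1} for 0 < i < k. Let e be a positive common multiple of m₀ and m_k. Then e·d·Σ_{i=0}^{k−1} 1/(m_i m_{i+1}) is a positive integer (the sum taken in ℚ). -/
/-!
The condition `m_i ∣ m_{i-1} + m_{i+1}` lets one build integers `p_i` with
`p_{i+1} m_i - p_i m_{i+1} = d` (start from a Bézout relation for `gcd(m₀, m₁) = d` and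
extend one step at a time). Then `d / (m_i m_{i+1}) = p_{i+1}/m_{i+1} - p_i/m_i`, the sum
telescopes, and `e d Σ 1/(m_i m_{i+1}) = p_k (e/m_k) - p₀ (e/m₀)` is an integer; it is
positive because every term is.
-/

theorem exists_mul_sub_mul_eq_of_dvd_add {R : Type*} [CommRing R] {m : ℕ → R} {d : R} {k : ℕ}
    (hbase : ∃ a b : R, a * m 0 - b * m 1 = d)
    (hdvd : ∀ i, i + 1 < k → m (i + 1) ∣ m i + m (i + 2)) :
    ∃ p : ℕ → R, ∀ i < k, p (i + 1) * m i - p i * m (i + 1) = d := by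
  induction k with
  | zero => exact ⟨0, by simp⟩
  | succ k ih =>
    obtain ⟨p, hp⟩ := ih fun i hi => hdvd i (by omega)
    obtain _ | j := k
    · obtain ⟨a, b, hab⟩ := hbase
      refine ⟨fun i => if i = 0 then b else a, fun i hi => ?_⟩
      obtain rfl : i = 0 := by omega
      simpa using hab
    · -- `m (j+1)` divides `d + p (j+1) * m (j+2) = p (j+1) * (m j + m (j+2)) - p j * m (j+1)`
      obtain ⟨q, hq⟩ : m (j + 1) ∣ d + p (j + 1) * m (j + 2) := by
        rw [← hp j (by omega)]
        convert ((hdvd j (by omega)).mul_left (p (j + 1))).sub (dvd_mul_left _ (p j)) using 1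
        ring
      refine ⟨Function.update p (j + 2) q, fun i hi => ?_⟩
      rcases (by omega : i < j + 1 ∨ i = j + 1) with hi | rfl
      · simp only [Function.update_of_ne (by omega : i + 1 ≠ j + 2),
          Function.update_of_ne (by omega : i ≠ j + 2)]
        exact hp i hi
      · rw [show j + 1 + 1 = j + 2 from rfl]
        simp only [Function.update_self, Function.update_of_ne (by omega : j + 1 ≠ j + 2)]
        linear_combination -hq

theorem mul_sum_one_div_mul_succ_eq_sub {K : Type*} [Field K] {m p : ℕ → K} {d : K} {k : ℕ}
    (hm : ∀ i ≤ k, m i ≠ 0) (hp : ∀ i < k, p (i + 1) * m i - p i * m (i + 1) = d) :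
    d * ∑ i ∈ Finset.range k, 1 / (m i * m (i + 1)) = p k / m k - p 0 / m 0 := by
  rw [Finset.mul_sum, ← Finset.sum_range_sub (fun i => p i / m i)]
  refine Finset.sum_congr rfl fun i hi => ?_
  have hi := Finset.mem_range.mp hi
  have h0 := hm i hi.le
  have h1 := hm (i + 1) hi
  field_simp
  linear_combination -(hp i hi)

/-- Integrality of the screw number: for a bamboo with positive multiplicities `m₀,…,m_k`,
`gcd(m_i, m_{i+1}) = d` and `m_i ∣ m_{i-1} + m_{i+1}`, and `e` a positive common multiple
of `m₀` and `m_k`, the quantity `e·d·Σ 1/(m_i m_{i+1})` is a positive integer. -/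
theorem stmt6 (k : ℕ) (hk : 1 ≤ k) (m : ℕ → ℕ) (d e : ℕ)
    (hpos : ∀ i ≤ k, 0 < m i)
    (hgcd : ∀ i < k, Nat.gcd (m i) (m (i+1)) = d)
    (hdvd : ∀ i, 0 < i → i < k → m i ∣ m (i-1) + m (i+1))
    (he : 0 < e) (he0 : m 0 ∣ e) (hek : m k ∣ e) :
    ∃ n : ℕ, 0 < n ∧
      (e : ℚ) * (d : ℚ) * ∑ i ∈ Finset.range k, 1 / ((m i : ℚ) * (m (i+1) : ℚ)) = n := by
  have hd : 0 < d := hgcd 0 hk ▸ Nat.gcd_pos_of_pos_left _ (hpos 0 k.zero_le)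
  have hm : ∀ i ≤ k, (m i : ℚ) ≠ 0 := fun i hi => by exact_mod_cast (hpos i hi).ne'
  obtain ⟨p, hp⟩ :=
    exists_mul_sub_mul_eq_of_dvd_add (m := fun i => (m i : ℤ)) (d := d) (k := k)
      ⟨Nat.gcdA (m 0) (m 1), -Nat.gcdB (m 0) (m 1),
        by rw [← hgcd 0 hk, Nat.gcd_eq_gcd_ab]; ring⟩
      fun i hi => by exact_mod_cast hdvd (i + 1) i.succ_pos hi
  set S := ∑ i ∈ Finset.range k, 1 / ((m i : ℚ) * (m (i+1) : ℚ))
  have htel : d * S = p k / m k - p 0 / m 0 := mul_sum_one_div_mul_succ_eq_sub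
    (m := fun i => (m i : ℚ)) (p := fun i => (p i : ℚ)) hm fun i hi => by exact_mod_cast hp i hi
  have hS : 0 < S := Finset.sum_pos (fun i hi => by
      have := hpos i (Finset.mem_range.mp hi).le
      have := hpos (i + 1) (Finset.mem_range.mp hi)
      positivity) (Finset.nonempty_range_iff.mpr (by omega))
  obtain ⟨a, rfl⟩ := hek
  obtain ⟨b, hb⟩ := he0
  have hval : (↑(m k * a) : ℚ) * d * S = (p k * a - p 0 * b : ℤ) := by
    have hbQ : (m k : ℚ) * a = m 0 * b := by exact_mod_cast hb
    have := hm k le_rfl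
    have := hm 0 k.zero_le
    rw [mul_assoc, htel]
    push_cast
    field_simp
    linear_combination -(p 0 : ℚ) * hbQ
  have hz : 0 < p k * a - p 0 * b := by
    have : (0 : ℚ) < (p k * a - p 0 * b : ℤ) := hval ▸ by positivity
    exact_mod_cast this
  obtain ⟨n, hn⟩ := Int.eq_ofNat_of_zero_le hz.le
  exact ⟨n, by omega, by rw [hval, hn]; rfl⟩
end

section
/- The 6×6 symmetric integer matrix M = [[2,−1,0,0,0,1],[−1,2,−1,0,0,0],[0,−1,2,−1,0,0],[0,0,−1,2,−1,0],[0,0,0,−1,2,0],[1,0,0,0,0,3]] is positive definite, and its upper-left 5×5 block (the A₅ Cartan matrix) is an even form, i.e. all diagonal entries of the block and all values vᵀBv for v ∈ ℤ⁵ are even. -/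
/-!
Completing squares gives
`vᵀ M v = (v₀ + v₅)² + 2 v₅² + (v₀ - v₁)² + (v₁ - v₂)² + (v₂ - v₃)² + (v₃ - v₄)² + v₄²`,
and these seven linear forms vanish simultaneously only at `v = 0`.
The upper-left block is the Cartan matrix `A₅`; for any symmetric matrix with even diagonal,
`vᵀ B v = ∑ Bᵢᵢ vᵢ² + 2 ∑_{i<j} Bᵢⱼ vᵢ vⱼ` is even.
-/

open Matrix

/-- The form `Q̃` of the A'Campo double `(7,6)`-cusp. -/
def M12 : Matrix (Fin 6) (Fin 6) ℤ :=
  !![2,-1,0,0,0,1; -1,2,-1,0,0,0; 0,-1,2,-1,0,0; 0,0,-1,2,-1,0; 0,0,0,-1,2,0; 1,0,0,0,0,3]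

/-- Its upper-left `5×5` block, the `A₅` Cartan matrix. -/
def B12 : Matrix (Fin 5) (Fin 5) ℤ := fun i j => M12 i.castSucc j.castSucc

namespace Matrix

variable {n R : Type*} [LinearOrder n] [CommSemiring R]

theorem IsSymm.eq_diagonal_add_add_transpose [DecidableEq n] {B : Matrix n n R} (hB : B.IsSymm) :
    B = diagonal B.diag + of (fun i j => if i < j then B i j else 0)
      + (of fun i j => if i < j then B i j else 0)ᵀ := by
  ext i j
  rcases lt_trichotomy i j with h | rfl | h
  · simp [h, h.ne, h.not_gt]
  · simp
  · simp [h, h.ne', h.not_gt, hB.apply i j]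

theorem IsSymm.even_dotProduct_mulVec_self [Fintype n] {B : Matrix n n R} (hB : B.IsSymm)
    (hdiag : ∀ i, Even (B i i)) (v : n → R) : Even (v ⬝ᵥ B *ᵥ v) := by
  classical
  obtain ⟨U, hU⟩ : ∃ U : Matrix n n R, B = diagonal B.diag + U + Uᵀ :=
    ⟨_, hB.eq_diagonal_add_add_transpose⟩
  have htranspose : v ⬝ᵥ Uᵀ *ᵥ v = v ⬝ᵥ U *ᵥ v := by
    rw [mulVec_transpose, dotProduct_comm, dotProduct_mulVec]
  rw [hU, add_mulVec, add_mulVec, dotProduct_add, dotProduct_add, htranspose, add_assoc]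
  refine (Finset.even_sum _ fun i _ => ?_).add ⟨_, rfl⟩
  rw [mulVec_diagonal]
  exact ((hdiag i).mul_right _).mul_left _

end Matrix

theorem B12_eq_cartanA : B12 = CartanMatrix.A 5 := by decide

theorem M12_dotProduct_mulVec_self (v : Fin 6 → ℤ) : v ⬝ᵥ M12 *ᵥ v =
    (v 0 + v 5) ^ 2 + 2 * v 5 ^ 2 + (v 0 - v 1) ^ 2 + (v 1 - v 2) ^ 2 + (v 2 - v 3) ^ 2
      + (v 3 - v 4) ^ 2 + v 4 ^ 2 := by
  simp only [dotProduct, mulVec, M12, of_apply, cons_val', cons_val_fin_one, Fin.sum_univ_succ,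
    cons_val_zero, cons_val_succ, Fin.succ_zero_eq_one, Fin.succ_one_eq_two, Fin.reduceSucc,
    Finset.univ_unique, Fin.default_eq_zero, Finset.sum_singleton]
  ring

theorem M12_posDef (v : Fin 6 → ℤ) (hv : v ≠ 0) : 0 < v ⬝ᵥ M12 *ᵥ v := by
  rw [M12_dotProduct_mulVec_self]
  by_contra! hle
  have eq_zero (x : ℤ) (hx : x ^ 2 ≤ 0) : x = 0 :=
    pow_eq_zero_iff two_ne_zero |>.mp (le_antisymm hx (sq_nonneg x))
  obtain ⟨h05, h5, h01, h12, h23, h34, h4⟩ : v 0 + v 5 = 0 ∧ v 5 = 0 ∧ v 0 - v 1 = 0 ∧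
      v 1 - v 2 = 0 ∧ v 2 - v 3 = 0 ∧ v 3 - v 4 = 0 ∧ v 4 = 0 := by
    refine ⟨eq_zero _ ?_, eq_zero _ ?_, eq_zero _ ?_, eq_zero _ ?_, eq_zero _ ?_, eq_zero _ ?_,
      eq_zero _ ?_⟩ <;>
      linarith [sq_nonneg (v 0 + v 5), sq_nonneg (v 5), sq_nonneg (v 0 - v 1),
        sq_nonneg (v 1 - v 2), sq_nonneg (v 2 - v 3), sq_nonneg (v 3 - v 4), sq_nonneg (v 4)]
  exact hv (funext fun i => by fin_cases i <;>
    simp only [Fin.zero_eta, Fin.mk_one, Fin.reduceFinMk, Pi.zero_apply] <;> omega)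

theorem CartanMatrix.even_A_apply_self (n : ℕ) (i : Fin n) : Even (CartanMatrix.A n i i) :=
  ⟨1, congrFun (CartanMatrix.A_diag n) i⟩

/-- `M12` is positive definite and its upper-left `5×5` block is an even form. -/
theorem stmt12 :
    (∀ v : Fin 6 → ℤ, v ≠ 0 → 0 < v ⬝ᵥ M12.mulVec v) ∧
    (∀ i, Even (B12 i i)) ∧
    (∀ v : Fin 5 → ℤ, Even (v ⬝ᵥ B12.mulVec v)) := by
  rw [B12_eq_cartanA]
  exact ⟨M12_posDef, CartanMatrix.even_A_apply_self 5,
    (CartanMatrix.A_isSymm 5).even_dotProduct_mulVec_self (CartanMatrix.even_A_apply_self 5)⟩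
end
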